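/- arXiv:1912.11421 — 4 statements merged into one kernel-verified Lean document; each statement's English description precedes it below -/
import Mathlib

section
/- Let r ≥ 2 and let H be an r-partite r-uniform hypergraph. If H has more than ((t-1)/r)·|∂H| edges, where ∂H denotes the shadow of H, then H contains (as a subhypergraph) every tight r-tree T having t edges. -/
/-- `TightSeq r es` says that the list of `r`-sets `es` (with the *last* added
edge at the head) is a valid construction sequence of a tight `r`-tree:
the last list entry is an arbitrary `r`-set, and every edge `e` added later
contains exactly one vertex `v` not belonging to the previously constructed
hypergraph, with `e \ {v}` contained in some previous edge. -/
def TightSeq {α : Type} [DecidableEq α] (r : ℕ) : List (Finset α) → Prop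
  | [] => False
  | [e] => e.card = r
  | e :: f :: rest =>
      e.card = r ∧
      (∃ v ∈ e, v ∉ List.foldr (· ∪ ·) (∅ : Finset α) (f :: rest) ∧
        ∃ g ∈ f :: rest, e \ {v} ⊆ g) ∧
      TightSeq r (f :: rest)

/-- A tight `r`-tree is an `r`-uniform hypergraph (given by its edge set)
that can be built by a tight construction sequence. -/
def IsTightTree {α : Type} [DecidableEq α] (r : ℕ) (T : Finset (Finset α)) : Prop :=
  ∃ es : List (Finset α), TightSeq r es ∧ es.toFinset = T

/-- A hypergraph `H` contains a hypergraph `T` if there is a map from the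
vertices of `T` to the vertices of `H`, injective on the vertex set of `T`,
sending every edge of `T` to an edge of `H`. -/
def HContains {α β : Type} [DecidableEq α] [DecidableEq β]
    (H : Finset (Finset α)) (T : Finset (Finset β)) : Prop :=
  ∃ f : β → α, Set.InjOn f ↑(T.sup id) ∧ ∀ e ∈ T, e.image f ∈ H

/-- The shadow of an `r`-uniform hypergraph `H`: the family of all
`(r-1)`-element vertex sets contained in some edge of `H`. -/
def shadowSets {α : Type} [DecidableEq α] (r : ℕ) (H : Finset (Finset α)) :
    Finset (Finset α) :=
  H.sup fun e => e.powersetCard (r - 1)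

/-!
Properly colour the tight tree `T` with the `r` parts (every new vertex takes the colour of the
vertex of the old edge it replaces); let `a i` be the size of colour class `i`, so that
`∑ (a i - 1) = t - 1`, and let `d i` count the shadow sets of `H` missing part `i`, so that
`∑ d i = |∂H|`. Averaging over the `r` cyclic shifts of the colours gives a shift with
`r ∑ (a i - 1) d i ≤ (t - 1) |∂H| < r |H|`. Now repeatedly delete all edges through a shadow
set missing part `i` of degree less than `a i`: each deletion costs at most `a i - 1` edges and
destroys a shadow set for good, so a nonempty subfamily survives in which every such set has
degree at least `a i`. There `T` embeds greedily, edge by edge: the new vertex of colour `i` has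
at least `a i` candidates, fewer than `a i` of which are already used.
-/

open Finset

theorem Fintype.exists_card_nsmul_sum_shift_mul_le {G R : Type*} [AddGroup G] [Fintype G]
    [CommSemiring R] [LinearOrder R] [IsOrderedCancelAddMonoid R] (f g : G → R) :
    ∃ k, Fintype.card G • ∑ i, f (i + k) * g i ≤ (∑ i, f i) * ∑ i, g i := by
  have hsum : ∑ k, ∑ i, f (i + k) * g i = (∑ i, f i) * ∑ i, g i := by
    rw [sum_comm, mul_sum]
    refine Finset.sum_congr rfl fun i _ => ?_
    rw [← sum_mul]
    exact congrArg (· * g i) (Equiv.sum_comp (Equiv.addLeft i) f)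
  obtain ⟨k, -, hk⟩ := exists_le_of_sum_le (s := univ)
    (f := fun k => Fintype.card G • ∑ i, f (i + k) * g i)
    (g := fun _ => (∑ i, f i) * ∑ i, g i) univ_nonempty
    (by rw [← smul_sum, hsum, sum_const, card_univ])
  exact ⟨k, hk⟩

theorem Fintype.sum_mul_add_le_sum_mul {ι : Type*} [Fintype ι] {w a b : ι → ℕ}
    (hab : ∀ j, a j ≤ b j) {i : ι} (hi : a i < b i) :
    ∑ j, w j * a j + w i ≤ ∑ j, w j * b j := by
  have hsplit : ∑ j, w j * b j = ∑ j, w j * a j + ∑ j, w j * (b j - a j) := by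
    rw [← sum_add_distrib]
    exact Finset.sum_congr rfl fun j _ => by rw [← mul_add, Nat.add_sub_cancel' (hab j)]
  have hwi : w i ≤ ∑ j, w j * (b j - a j) :=
    (Nat.le_mul_of_pos_right _ (by omega)).trans
      (single_le_sum (f := fun j => w j * (b j - a j)) (fun j _ => Nat.zero_le _) (mem_univ i))
  omega

theorem Nat.lt_of_mul_le_of_div_mul_lt {r t s d n : ℕ} (hr : 0 < r) (ht : 0 < t)
    (h : r * s ≤ (t - 1) * d) (hn : ((t : ℝ) - 1) / r * d < n) : s < n := by
  have hr' : (0 : ℝ) < r := Nat.cast_pos.2 hr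
  have h' : (r : ℝ) * s ≤ ((t : ℝ) - 1) * d := by
    have h := (Nat.cast_le (α := ℝ)).2 h
    push_cast [Nat.cast_sub (Nat.one_le_of_lt ht)] at h
    exact h
  have hs : (s : ℝ) ≤ ((t : ℝ) - 1) / r * d := by
    rw [div_mul_eq_mul_div, le_div_iff₀ hr']
    linarith
  exact_mod_cast hs.trans_lt hn

theorem Set.InjOn.of_card_filter_eq_one {α ι : Type*} [DecidableEq ι] {c : α → ι}
    {e : Finset α} (h : ∀ i, #{v ∈ e | c v = i} = 1) : Set.InjOn c e := fun x hx y hy hxy =>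
  card_le_one.1 (h (c x)).le x (mem_filter.2 ⟨hx, rfl⟩) y (mem_filter.2 ⟨hy, hxy.symm⟩)

theorem Finset.image_eq_univ_of_injOn {α : Type*} {r : ℕ} {c : α → Fin r} {e : Finset α}
    (hc : Set.InjOn c e) (he : #e = r) : e.image c = univ :=
  eq_univ_of_card _ (by rw [card_image_of_injOn hc, he, Fintype.card_fin])

theorem Finset.sum_card_filter_sub_one {α ι : Type*} [Fintype ι] [DecidableEq ι] {c : α → ι}
    {W : Finset α} (hW : ∀ i, ∃ x ∈ W, c x = i) :
    ∑ i, (#{x ∈ W | c x = i} - 1) = #W - Fintype.card ι := by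
  rw [sum_tsub_distrib, ← card_eq_sum_card_fiberwise fun x _ => mem_univ (c x)]
  · simp
  · intro i _
    obtain ⟨x, hx, rfl⟩ := hW i
    exact card_pos.2 ⟨x, mem_filter.2 ⟨hx, rfl⟩⟩

theorem Set.InjOn.update {α β : Type*} [DecidableEq α] {f : α → β} {s : Set α} {a : α}
    {b : β} (hf : Set.InjOn f s) (ha : a ∉ s) (hb : b ∉ f '' s) :
    Set.InjOn (Function.update f a b) (insert a s) := by
  have hfs : Set.EqOn (Function.update f a b) f s := fun x hx =>
    Function.update_of_ne (ne_of_mem_of_not_mem hx ha) _ _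
  rw [Set.injOn_insert ha, hfs.image_eq, Function.update_self]
  exact ⟨hf.congr hfs.symm, hb⟩

namespace SetFamily

variable {α : Type} [DecidableEq α]

def vertices (es : List (Finset α)) : Finset α := es.foldr (· ∪ ·) ∅

@[simp] theorem vertices_nil : vertices ([] : List (Finset α)) = ∅ := rfl

@[simp] theorem vertices_cons (e : Finset α) (es : List (Finset α)) :
    vertices (e :: es) = e ∪ vertices es := rfl

theorem mem_vertices {es : List (Finset α)} {v : α} :
    v ∈ vertices es ↔ ∃ e ∈ es, v ∈ e := by
  induction es with
  | nil => simp
  | cons e es ih => simp [ih]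

theorem subset_vertices {es : List (Finset α)} {e : Finset α} (he : e ∈ es) :
    e ⊆ vertices es :=
  fun _ hv => mem_vertices.2 ⟨e, he, hv⟩

theorem sup_id_toFinset (es : List (Finset α)) : es.toFinset.sup id = vertices es := by
  induction es with
  | nil => rfl
  | cons e es ih => simp [ih]

theorem vertices_cons_eq_insert {e g : Finset α} {tl : List (Finset α)} {v : α} (hv : v ∈ e)
    (hg : g ∈ tl) (heg : e.erase v ⊆ g) : vertices (e :: tl) = insert v (vertices tl) := by
  rw [vertices_cons, ← insert_erase hv, insert_union,
    union_eq_right.2 (heg.trans (subset_vertices hg))]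

def degree (H : Finset (Finset α)) (s : Finset α) : ℕ := #{e ∈ H | s ⊆ e}

def shadowAvoiding (r : ℕ) (P : α → Fin r) (i : Fin r) (H : Finset (Finset α)) :
    Finset (Finset α) :=
  {s ∈ shadowSets r H | i ∉ s.image P}

variable {r : ℕ} {P : α → Fin r} {H H' : Finset (Finset α)} {s : Finset α} {i : Fin r}

theorem mem_shadowSets : s ∈ shadowSets r H ↔ ∃ e ∈ H, s ⊆ e ∧ #s = r - 1 := by
  simp [shadowSets, mem_sup, mem_powersetCard]

theorem shadowAvoiding_mono (h : H' ⊆ H) : shadowAvoiding r P i H' ⊆ shadowAvoiding r P i H :=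
  filter_subset_filter _ (sup_mono h)

theorem degree_pos (hs : s ∈ shadowSets r H) : 0 < degree H s := by
  obtain ⟨e, he, hse, -⟩ := mem_shadowSets.1 hs
  exact card_pos.2 ⟨e, mem_filter.2 ⟨he, hse⟩⟩

theorem card_shadowSets_eq_sum [NeZero r] (hP : ∀ e ∈ H, Set.InjOn P e) :
    #(shadowSets r H) = ∑ i, #(shadowAvoiding r P i H) := by
  simp_rw [shadowAvoiding, card_filter]
  rw [sum_comm, card_eq_sum_ones]
  refine sum_congr rfl fun s hs => ?_
  obtain ⟨e, he, hse, hs⟩ := mem_shadowSets.1 hs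
  have hmiss : #(univ \ s.image P) = 1 := by
    rw [card_univ_sdiff, card_image_of_injOn ((hP e he).mono hse), hs, Fintype.card_fin]
    have := NeZero.pos r
    omega
  rw [← card_filter, ← hmiss]
  congr 1
  ext j
  simp

theorem exists_insert_mem_of_card_lt_degree (hunif : ∀ e ∈ H, #e = r)
    (hP : ∀ e ∈ H, Set.InjOn P e) (hs : s ∈ shadowAvoiding r P i H) {B : Finset α}
    (hB : #B < degree H s) : ∃ u ∉ B, P u = i ∧ insert u s ∈ H := by
  obtain ⟨hsH, hi⟩ := mem_filter.1 hs
  obtain ⟨-, -, -, hscard⟩ := mem_shadowSets.1 hsH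
  set E : Finset (Finset α) := {e ∈ H | s ⊆ e}
  have hinj : Set.InjOn (· \ s) E := fun e he e' he' hee' => by
    rw [← sdiff_union_of_subset (mem_filter.1 he).2,
      ← sdiff_union_of_subset (mem_filter.1 he').2]
    exact congrArg (· ∪ s) hee'
  obtain ⟨d, hd, hdB⟩ := exists_mem_notMem_of_card_lt_card (s := B.image singleton)
    (t := E.image (· \ s))
    (by rw [card_image_of_injOn hinj]; exact card_image_le.trans_lt hB)
  obtain ⟨e, he, rfl⟩ := mem_image.1 hd
  obtain ⟨heH, hse⟩ := mem_filter.1 he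
  obtain ⟨u, hu⟩ : ∃ u, e \ s = {u} :=
    card_eq_one.1 (by rw [card_sdiff_of_subset hse, hunif e heH, hscard]; have := i.pos; omega)
  have heu : e = insert u s := by rw [← sdiff_union_of_subset hse, hu, insert_eq]
  refine ⟨u, fun huB => hdB (hu ▸ mem_image_of_mem _ huB), ?_, heu ▸ heH⟩
  obtain ⟨y, hy, rfl⟩ :=
    mem_image.1 (image_eq_univ_of_injOn (hP e heH) (hunif e heH) ▸ mem_univ i)
  have hys : y ∉ s := fun hys => hi (mem_image_of_mem P hys)
  exact congrArg P (mem_singleton.1 (hu ▸ mem_sdiff.2 ⟨hy, hys⟩)).symm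

theorem exists_subset_le_degree (P : α → Fin r) (m : Fin r → ℕ) (H : Finset (Finset α))
    (hH : ∑ i, (m i - 1) * #(shadowAvoiding r P i H) < #H) :
    ∃ H' ⊆ H, H'.Nonempty ∧
      ∀ i, ∀ s ∈ shadowAvoiding r P i H', m i ≤ degree H' s := by
  induction H using Finset.strongInduction with
  | H H ih =>
  by_cases hlow : ∃ i, ∃ s ∈ shadowAvoiding r P i H, degree H s < m i
  · obtain ⟨i, s, hs, hdeg⟩ := hlow
    set H₀ := {e ∈ H | ¬ s ⊆ e}
    have hH₀ : H₀ ⊆ H := filter_subset _ _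
    have hcard : #H₀ + degree H s = #H := by
      rw [add_comm]; exact card_filter_add_card_filter_not _
    have hpos := degree_pos (mem_filter.1 hs).1
    have hlost : s ∉ shadowAvoiding r P i H₀ := fun hs₀ => by
      obtain ⟨e, he, hse, -⟩ := mem_shadowSets.1 (mem_filter.1 hs₀).1
      exact (mem_filter.1 he).2 hse
    have hsum : ∑ j, (m j - 1) * #(shadowAvoiding r P j H₀) + (m i - 1) ≤
        ∑ j, (m j - 1) * #(shadowAvoiding r P j H) :=
      Fintype.sum_mul_add_le_sum_mul (fun j => card_le_card (shadowAvoiding_mono hH₀))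
        (card_lt_card ((ssubset_iff_of_subset (shadowAvoiding_mono hH₀)).2 ⟨s, hs, hlost⟩))
    have hlt : ∑ j, (m j - 1) * #(shadowAvoiding r P j H₀) < #H₀ := by omega
    have hH₀H : H₀ ⊂ H :=
      Finset.ssubset_iff_subset_ne.2 ⟨hH₀, fun h => by rw [h] at hcard; omega⟩
    obtain ⟨H', hH'H₀, hne, hdeg'⟩ := ih H₀ hH₀H hlt
    exact ⟨H', hH'H₀.trans hH₀, hne, hdeg'⟩
  · push Not at hlow
    exact ⟨H, Subset.rfl, card_pos.1 (by omega), hlow⟩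

variable {β : Type} [DecidableEq β]

theorem image_erase_mem_shadowAvoiding {c : β → Fin r} {f : β → α} {e g : Finset β} {v : β}
    (he : #e = r) (hc : Set.InjOn c e) (hv : v ∈ e) (heg : e.erase v ⊆ g)
    (hf : Set.InjOn f g) (hPf : ∀ x ∈ g, P (f x) = c x) (hgH : g.image f ∈ H) :
    (e.erase v).image f ∈ shadowAvoiding r P (c v) H := by
  refine mem_filter.2 ⟨mem_shadowSets.2 ⟨g.image f, hgH, image_subset_image heg, ?_⟩, ?_⟩
  · rw [card_image_of_injOn (hf.mono heg), card_erase_of_mem hv, he]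
  · rw [Finset.image_image, mem_image]
    rintro ⟨x, hx, hxv⟩
    rw [Function.comp_apply, hPf x (heg hx)] at hxv
    exact ne_of_mem_erase hx (hc (mem_of_mem_erase hx) hv hxv)

def IsColouredEmbedding (P : α → Fin r) (c : β → Fin r) (H : Finset (Finset α))
    (es : List (Finset β)) (f : β → α) : Prop :=
  Set.InjOn f (vertices es) ∧ (∀ x ∈ vertices es, P (f x) = c x) ∧
    ∀ e ∈ es, e.image f ∈ H

theorem exists_isColouredEmbedding_singleton {c : β → Fin r} {e : Finset β} {h : Finset α}
    (hh : h ∈ H) (hhr : #h = r) (hPh : Set.InjOn P h) (he : #e = r) (hc : Set.InjOn c e) :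
    ∃ f, IsColouredEmbedding P c H [e] f := by
  have hcolours : ∀ i, ∃ u ∈ h, P u = i := fun i =>
    mem_image.1 (image_eq_univ_of_injOn hPh hhr ▸ mem_univ i)
  choose σ hσh hPσ using hcolours
  have hce : Set.InjOn (σ ∘ c) e := (Function.LeftInverse.injective hPσ).comp_injOn hc
  have himage : e.image (σ ∘ c) = h := eq_of_subset_of_card_le
    (fun u hu => by obtain ⟨x, -, rfl⟩ := mem_image.1 hu; exact hσh _)
    (by rw [card_image_of_injOn hce, he, hhr])
  refine ⟨σ ∘ c, by simpa using hce, fun x _ => hPσ (c x), ?_⟩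
  rintro _ (_ | ⟨_, ⟨⟩⟩)
  rwa [himage]

theorem IsColouredEmbedding.exists_cons (hunif : ∀ e ∈ H, #e = r)
    (hP : ∀ e ∈ H, Set.InjOn P e) {a : Fin r → ℕ}
    (hdeg : ∀ i, ∀ s ∈ shadowAvoiding r P i H, a i ≤ degree H s) {c : β → Fin r}
    {f : β → α} {e g : Finset β} {tl : List (Finset β)} {v : β}
    (hf : IsColouredEmbedding P c H tl f) (he : #e = r) (hc : Set.InjOn c e) (hv : v ∈ e)
    (hvtl : v ∉ vertices tl) (hg : g ∈ tl) (heg : e.erase v ⊆ g)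
    (ha : #{x ∈ vertices (e :: tl) | c x = c v} ≤ a (c v)) :
    ∃ f', IsColouredEmbedding P c H (e :: tl) f' := by
  obtain ⟨hfi, hPf, hfH⟩ := hf
  have hV := vertices_cons_eq_insert hv hg heg
  have hgV := subset_vertices hg
  have hs := image_erase_mem_shadowAvoiding he hc hv heg (hfi.mono hgV)
    (fun x hx => hPf x (hgV hx)) (hfH g hg)
  set B := {x ∈ vertices tl | c x = c v}.image f
  have hB : #B < degree H ((e.erase v).image f) := calc
    #B ≤ #{x ∈ vertices tl | c x = c v} := card_image_le
    _ < #{x ∈ vertices (e :: tl) | c x = c v} := by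
      refine card_lt_card
        ((ssubset_iff_of_subset (filter_subset_filter _ subset_union_right)).2 ⟨v, ?_, ?_⟩)
      · exact mem_filter.2 ⟨mem_union_left _ hv, rfl⟩
      · exact fun hv' => hvtl (mem_filter.1 hv').1
    _ ≤ a (c v) := ha
    _ ≤ _ := hdeg _ _ hs
  obtain ⟨u, huB, hPu, huH⟩ := exists_insert_mem_of_card_lt_degree hunif hP hs hB
  have hu : u ∉ f '' vertices tl := by
    rintro ⟨x, hx, rfl⟩
    exact huB (mem_image_of_mem f (mem_filter.2 ⟨hx, hPf x hx ▸ hPu⟩))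
  have hfu : Set.EqOn (Function.update f v u) f (vertices tl) := fun x hx =>
    Function.update_of_ne (ne_of_mem_of_not_mem hx hvtl) _ _
  refine ⟨Function.update f v u, ?_, ?_, ?_⟩
  · rw [hV, coe_insert]
    exact hfi.update hvtl hu
  · intro x hx
    rw [hV, mem_insert] at hx
    rcases hx with rfl | hx
    · rwa [Function.update_self]
    · rw [hfu hx, hPf x hx]
  · rintro e' (_ | ⟨_, he'⟩)
    · rwa [← insert_erase hv, image_insert, Function.update_self,
        image_congr (hfu.mono (heg.trans hgV))]
    · rw [image_congr (hfu.mono (subset_vertices he'))]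
      exact hfH e' he'

end SetFamily

namespace TightSeq

open SetFamily

variable {β : Type} [DecidableEq β] {r : ℕ}

@[elab_as_elim]
theorem induction {motive : List (Finset β) → Prop}
    (single : ∀ e : Finset β, #e = r → motive [e])
    (cons : ∀ (e : Finset β) (tl : List (Finset β)) (v : β) (g : Finset β), TightSeq r tl →
      v ∈ e → v ∉ vertices tl → g ∈ tl → e.erase v ⊆ g → #e = r → motive tl →
      motive (e :: tl))
    {es : List (Finset β)} (hes : TightSeq r es) : motive es := by
  induction es with
  | nil => exact hes.elim
  | cons e tl ih =>
    match tl, hes with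
    | [], he => exact single e he
    | _ :: _, ⟨he, ⟨v, hv, hvtl, g, hg, heg⟩, htl⟩ =>
      exact cons e _ v g htl hv hvtl hg (by rwa [← sdiff_singleton_eq_erase]) he (ih htl)

variable {es : List (Finset β)}

theorem length_pos (hes : TightSeq r es) : 0 < es.length :=
  List.length_pos_iff.2 (by rintro rfl; exact hes)

theorem card_of_mem (hes : TightSeq r es) : ∀ e ∈ es, #e = r := by
  refine TightSeq.induction (fun e he => by simpa using he)
    (fun e tl v g htl hv hvtl hg heg he ih => by simpa [he] using ih) hes

theorem nodup (hes : TightSeq r es) : es.Nodup := by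
  refine TightSeq.induction (fun e _ => List.nodup_singleton e)
    (fun e tl v g htl hv hvtl hg heg he ih => ?_) hes
  exact List.nodup_cons.2 ⟨fun he => hvtl (subset_vertices he hv), ih⟩

theorem card_vertices (hes : TightSeq r es) : #(vertices es) + 1 = es.length + r := by
  refine TightSeq.induction (fun e he => by simp [he, add_comm])
    (fun e tl v g htl hv hvtl hg heg he ih => ?_) hes
  rw [vertices_cons_eq_insert hv hg heg, card_insert_of_notMem hvtl, List.length_cons]
  omega

theorem exists_injOn_colouring [NeZero r] (hes : TightSeq r es) :
    ∃ c : β → Fin r, ∀ e ∈ es, Set.InjOn c e := by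
  refine TightSeq.induction (fun e he => ?_) (fun e tl v g htl hv hvtl hg heg he ih => ?_) hes
  · obtain ⟨c, hc⟩ := Set.exists_injOn_iff_injective.2
      ⟨finCongr he ∘ e.equivFin, (finCongr he).injective.comp e.equivFin.injective⟩
    exact ⟨c, by simpa using hc⟩
  · obtain ⟨c, hc⟩ := ih
    have hcg := hc g hg
    obtain ⟨w, hwg, hwe⟩ := exists_mem_notMem_of_card_lt_card (s := e.erase v) (t := g)
      (by rw [card_erase_of_mem hv, he, htl.card_of_mem g hg]; have := NeZero.pos r; omega)
    have hvold : ∀ e' ∈ tl, v ∉ e' := fun e' he' hve' => hvtl (subset_vertices he' hve')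
    refine ⟨Function.update c v (c w), ?_⟩
    rintro e' (_ | ⟨_, he'⟩)
    · rw [← insert_erase hv, coe_insert]
      refine (hcg.mono heg).update (by simp) ?_
      rintro ⟨x, hx, hxw⟩
      exact hwe (hcg hwg (heg hx) hxw.symm ▸ hx)
    · exact (hc e' he').congr fun x hx =>
        (Function.update_of_ne (ne_of_mem_of_not_mem hx (hvold e' he')) _ _).symm

theorem sum_card_filter_sub_one {c : β → Fin r} (hes : TightSeq r es)
    (hc : ∀ e ∈ es, Set.InjOn c e) :
    ∑ i, (#{x ∈ vertices es | c x = i} - 1) = es.length - 1 := by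
  obtain ⟨e, he⟩ := List.exists_mem_of_length_pos hes.length_pos
  rw [Finset.sum_card_filter_sub_one fun i => ?_, Fintype.card_fin]
  · have := hes.card_vertices
    omega
  obtain ⟨x, hx, rfl⟩ :=
    mem_image.1 (image_eq_univ_of_injOn (hc e he) (hes.card_of_mem e he) ▸ mem_univ i)
  exact ⟨x, subset_vertices he hx, rfl⟩

variable {α : Type} [DecidableEq α] {P : α → Fin r} {H : Finset (Finset α)}

theorem exists_isColouredEmbedding (hH : H.Nonempty) (hunif : ∀ e ∈ H, #e = r)
    (hP : ∀ e ∈ H, Set.InjOn P e) {a : Fin r → ℕ}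
    (hdeg : ∀ i, ∀ s ∈ shadowAvoiding r P i H, a i ≤ degree H s) {c : β → Fin r}
    (hes : TightSeq r es) :
    (∀ e ∈ es, Set.InjOn c e) → (∀ i, #{x ∈ vertices es | c x = i} ≤ a i) →
    ∃ f, IsColouredEmbedding P c H es f := by
  refine TightSeq.induction (fun e he => ?_) (fun e tl v g htl hv hvtl hg heg he ih => ?_) hes
  · intro hc _
    obtain ⟨h, hh⟩ := hH
    exact exists_isColouredEmbedding_singleton hh (hunif h hh) (hP h hh) he
      (hc e (List.mem_singleton_self e))
  · intro hc ha
    have htlV : vertices tl ⊆ vertices (e :: tl) := subset_union_right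
    obtain ⟨f, hf⟩ := ih (fun e' he' => hc e' (List.mem_cons_of_mem _ he'))
      (fun i => (card_le_card (filter_subset_filter _ htlV)).trans (ha i))
    exact hf.exists_cons hunif hP hdeg he (hc e List.mem_cons_self) hv hvtl hg heg (ha (c v))

end TightSeq

open SetFamily

/-- **Theorem (main result).** Let `r ≥ 2` and let `H` be an `r`-partite
`r`-uniform hypergraph (partition given by the colouring `P`). If `H` has more
than `((t-1)/r)·|∂H|` edges, then `H` contains every tight `r`-tree with `t`
edges. -/
theorem rpartite_kalai_shadow {α : Type} [DecidableEq α] (r t : ℕ) (hr : 2 ≤ r)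
    (H : Finset (Finset α)) (hunif : ∀ e ∈ H, e.card = r)
    (P : α → Fin r) (hpart : ∀ e ∈ H, ∀ i, (e.filter fun v => P v = i).card = 1)
    (hcard : ((t : ℝ) - 1) / r * (shadowSets r H).card < H.card) :
    ∀ (β : Type) [DecidableEq β] (T : Finset (Finset β)),
      IsTightTree r T → T.card = t → HContains H T := by
  rintro β _ _ ⟨es, hes, rfl⟩ hT
  have : NeZero r := ⟨by omega⟩
  have hlen : es.length = t := by rw [← hT, List.toFinset_card_of_nodup hes.nodup]
  have hP : ∀ e ∈ H, Set.InjOn P e := fun e he => .of_card_filter_eq_one (hpart e he)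
  obtain ⟨c, hc⟩ := hes.exists_injOn_colouring
  set a : Fin r → ℕ := fun i => #{x ∈ vertices es | c x = i}
  obtain ⟨k, hk⟩ := Fintype.exists_card_nsmul_sum_shift_mul_le (fun i => a i - 1)
    fun i => #(shadowAvoiding r P i H)
  rw [Fintype.card_fin, smul_eq_mul, hes.sum_card_filter_sub_one hc, hlen,
    ← card_shadowSets_eq_sum hP] at hk
  obtain ⟨H', hH'H, hH', hdeg⟩ := exists_subset_le_degree P (fun i => a (i + k)) H
    (Nat.lt_of_mul_le_of_div_mul_lt (NeZero.pos r) (hlen ▸ hes.length_pos) hk hcard)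
  obtain ⟨f, hf, -, hfH'⟩ := hes.exists_isColouredEmbedding hH' (fun e he => hunif e (hH'H he))
    (fun e he => hP e (hH'H he)) hdeg (c := fun x => c x - k)
    (fun e he => sub_left_injective.comp_injOn (hc e he))
    (fun i => by simp only [a, sub_eq_iff_eq_add, le_rfl])
  exact ⟨f, by rwa [sup_id_toFinset], fun e he => hH'H (hfH' e (List.mem_toFinset.1 he))⟩
end

section
/- For all natural numbers t₁, t₂, every bipartite graph G with average degree strictly greater than t₁ + t₂ - 2 has a non-empty subgraph G' with bipartition classes V₁ and V₂ such that every vertex in V₁ has degree at least t₁ in G' and every vertex in V₂ has degree at least t₂ in G'. -/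
/-!
Colour the bipartition classes so that the vertices of one class must reach degree `t₁` and those
of the other degree `t₂`, and set `d v = tᵢ - 1` on class `i`. The two possible assignments give
`∑ d` values adding up to `(t₁ + t₂ - 2) n < 2 e(G)`, so for one of them `∑_v d v < e(G)`.
The inequality `∑_{v ∈ S} d v < e(S)` survives the deletion of any vertex `v` of `S` whose degree
inside `S` is at most `d v`, and fails for `S = ∅`; deleting such vertices as long as possible
therefore stops at a non-empty set in which every vertex of class `i` has degree at least `tᵢ`.
-/

open Finset SimpleGraph

namespace SimpleGraph

variable {V : Type} (G : SimpleGraph V) [DecidableRel G.Adj]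

theorem sum_card_filter_adj_erase [DecidableEq V] {S : Finset V} {v : V} (hv : v ∈ S) :
    ∑ u ∈ S, #{w ∈ S | G.Adj u w} =
      ∑ u ∈ S.erase v, #{w ∈ S.erase v | G.Adj u w} + 2 * #{w ∈ S | G.Adj v w} := by
  have hdeg (u : V) :
      #{w ∈ S | G.Adj u w} = #{w ∈ S.erase v | G.Adj u w} + if G.Adj u v then 1 else 0 := by
    rw [filter_erase]
    split_ifs with h
    · exact (card_erase_add_one (mem_filter.2 ⟨hv, h⟩)).symm
    · rw [erase_eq_of_notMem (by simp [h]), add_zero]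
  have hnbr : #{u ∈ S.erase v | G.Adj u v} = #{w ∈ S | G.Adj v w} := by
    rw [filter_erase, erase_eq_of_notMem (by simp)]
    simp_rw [G.adj_comm]
  rw [← add_sum_erase S _ hv, sum_congr rfl fun u _ ↦ hdeg u, sum_add_distrib, sum_boole, hnbr]
  push_cast
  ring

theorem sum_card_filter_adj [Fintype V] :
    ∑ v, #{w | G.Adj v w} = 2 * #G.edgeFinset := by
  simp_rw [← neighborFinset_eq_filter, card_neighborFinset_eq_degree]
  exact G.sum_degrees_eq_twice_card_edges

/-- `∑ u ∈ S, #{w ∈ S | G.Adj u w}` is twice the number of edges inside `S`. -/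
theorem exists_subset_forall_lt_card_filter_adj [DecidableEq V] (d : V → ℤ) (S : Finset V)
    (h : 2 * ∑ v ∈ S, d v < ∑ v ∈ S, (#{w ∈ S | G.Adj v w} : ℤ)) :
    ∃ T ⊆ S, T.Nonempty ∧ ∀ v ∈ T, d v < #{w ∈ T | G.Adj v w} := by
  induction S using Finset.strongInduction with
  | H S ih =>
    by_cases hS : ∀ v ∈ S, d v < #{w ∈ S | G.Adj v w}
    · refine ⟨S, subset_rfl, nonempty_iff_ne_empty.2 ?_, hS⟩
      rintro rfl
      simp at h
    · push Not at hS
      obtain ⟨v, hv, hlow⟩ := hS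
      have herase := congrArg (Nat.cast : ℕ → ℤ) (G.sum_card_filter_adj_erase hv)
      push_cast at herase
      rw [← add_sum_erase S _ hv] at h
      obtain ⟨T, hTS, hT⟩ := ih (S.erase v) (erase_ssubset hv) (by linarith)
      exact ⟨T, hTS.trans (erase_subset v S), hT⟩

def HasBipartiteSubgraphWithMinDegrees (t₁ t₂ : ℕ) : Prop :=
  ∃ (G' : G.Subgraph) (V₁ V₂ : Set V),
    G'.verts.Nonempty ∧ V₁ ∪ V₂ = G'.verts ∧ Disjoint V₁ V₂ ∧
    (∀ v w, G'.Adj v w → (v ∈ V₁ ∧ w ∈ V₂) ∨ (v ∈ V₂ ∧ w ∈ V₁)) ∧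
    (∀ v ∈ V₁, t₁ ≤ {w | G'.Adj v w}.ncard) ∧
    (∀ v ∈ V₂, t₂ ≤ {w | G'.Adj v w}.ncard)

variable {G}

theorem hasBipartiteSubgraphWithMinDegrees_of_forall_le_card_filter_adj {t₁ t₂ : ℕ}
    {c : V → Bool} (hc : ∀ v w, G.Adj v w → c v ≠ c w) {T : Finset V} (hT : T.Nonempty)
    (hdeg : ∀ v ∈ T, (bif c v then t₁ else t₂) ≤ #{w ∈ T | G.Adj v w}) :
    G.HasBipartiteSubgraphWithMinDegrees t₁ t₂ := by
  have hnbr : ∀ v ∈ T, {w | ((⊤ : G.Subgraph).induce T).Adj v w} = ↑{w ∈ T | G.Adj v w} := by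
    intro v hv
    ext w
    simp [hv]
  refine ⟨(⊤ : G.Subgraph).induce T, {v | v ∈ T ∧ c v = true}, {v | v ∈ T ∧ c v = false},
    ?_, ?_, ?_, ?_, ?_, ?_⟩
  · simpa using hT
  · ext v
    cases hcv : c v <;> simp [hcv]
  · exact Set.disjoint_left.2 fun v hv₁ hv₂ ↦ by simp_all
  · rintro v w ⟨hv, hw, hvw⟩
    have := hc v w hvw
    cases hcv : c v <;> simp_all
  · rintro v ⟨hv, hcv⟩
    rw [hnbr v hv, Set.ncard_coe_finset]
    simpa [hcv] using hdeg v hv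
  · rintro v ⟨hv, hcv⟩
    rw [hnbr v hv, Set.ncard_coe_finset]
    simpa [hcv] using hdeg v hv

theorem hasBipartiteSubgraphWithMinDegrees_of_sum_lt [Fintype V] [DecidableEq V] {t₁ t₂ : ℕ}
    {c : V → Bool} (hc : ∀ v w, G.Adj v w → c v ≠ c w)
    (h : ∑ v, (((bif c v then t₁ else t₂ : ℕ) : ℤ) - 1) < #G.edgeFinset) :
    G.HasBipartiteSubgraphWithMinDegrees t₁ t₂ := by
  have hpairs := congrArg (Nat.cast : ℕ → ℤ) G.sum_card_filter_adj
  push_cast at hpairs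
  obtain ⟨T, -, hT, hdeg⟩ := G.exists_subset_forall_lt_card_filter_adj
    (fun v ↦ ((bif c v then t₁ else t₂ : ℕ) : ℤ) - 1) univ (by simp only [hpairs]; linarith)
  exact hasBipartiteSubgraphWithMinDegrees_of_forall_le_card_filter_adj hc hT
    fun v hv ↦ by have := hdeg v hv; omega

end SimpleGraph

theorem bipartite_min_degree_subgraph_general {V : Type} [Fintype V]
    [Nonempty V] (t₁ t₂ : ℕ) (G : SimpleGraph V) [DecidableRel G.Adj]
    (hbip : ∃ c : V → Bool, ∀ v w, G.Adj v w → c v ≠ c w)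
    (hdeg : (t₁ : ℝ) + t₂ - 2 < 2 * G.edgeFinset.card / Fintype.card V) :
    ∃ (G' : G.Subgraph) (V₁ V₂ : Set V),
      G'.verts.Nonempty ∧ V₁ ∪ V₂ = G'.verts ∧ Disjoint V₁ V₂ ∧
      (∀ v w, G'.Adj v w → (v ∈ V₁ ∧ w ∈ V₂) ∨ (v ∈ V₂ ∧ w ∈ V₁)) ∧
      (∀ v ∈ V₁, t₁ ≤ {w | G'.Adj v w}.ncard) ∧
      (∀ v ∈ V₂, t₂ ≤ {w | G'.Adj v w}.ncard) := by
  classical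
  obtain ⟨c, hc⟩ := hbip
  have hE : ((t₁ : ℤ) + t₂ - 2) * Fintype.card V < 2 * #G.edgeFinset := by
    rw [lt_div_iff₀ (by exact_mod_cast Fintype.card_pos)] at hdeg
    exact_mod_cast hdeg
  have hsum : ∑ v, (((bif c v then t₁ else t₂ : ℕ) : ℤ) - 1)
      + ∑ v, (((bif !c v then t₁ else t₂ : ℕ) : ℤ) - 1)
      = ((t₁ : ℤ) + t₂ - 2) * Fintype.card V := by
    have hpair (v : V) : (((bif c v then t₁ else t₂ : ℕ) : ℤ) - 1)
        + (((bif !c v then t₁ else t₂ : ℕ) : ℤ) - 1) = (t₁ : ℤ) + t₂ - 2 := by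
      cases c v <;> simp <;> ring
    rw [← sum_add_distrib, sum_congr rfl fun v _ ↦ hpair v, sum_const, card_univ, nsmul_eq_mul,
      mul_comm]
  by_cases h : ∑ v, (((bif c v then t₁ else t₂ : ℕ) : ℤ) - 1) < #G.edgeFinset
  · exact hasBipartiteSubgraphWithMinDegrees_of_sum_lt hc h
  · exact hasBipartiteSubgraphWithMinDegrees_of_sum_lt (c := fun v ↦ !c v)
      (fun v w hvw hne ↦ hc v w hvw (by simpa using hne)) (by linarith)

/-- **Corollary.** For all natural numbers `t₁, t₂`, every bipartite graph `G`
with average degree strictly greater than `t₁ + t₂ - 2` has a non-empty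
subgraph `G'` with bipartition classes `V₁`, `V₂` such that every vertex in
`Vᵢ` has degree at least `tᵢ` in `G'`, for `i = 1, 2`. -/
theorem bipartite_min_degree_subgraph {V : Type} [Fintype V] [DecidableEq V]
    [Nonempty V] (t₁ t₂ : ℕ) (G : SimpleGraph V) [DecidableRel G.Adj]
    (hbip : ∃ c : V → Bool, ∀ v w, G.Adj v w → c v ≠ c w)
    (hdeg : (t₁ : ℝ) + t₂ - 2 < 2 * G.edgeFinset.card / Fintype.card V) :
    ∃ (G' : G.Subgraph) (V₁ V₂ : Set V),
      G'.verts.Nonempty ∧ V₁ ∪ V₂ = G'.verts ∧ Disjoint V₁ V₂ ∧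
      (∀ v w, G'.Adj v w → (v ∈ V₁ ∧ w ∈ V₂) ∨ (v ∈ V₂ ∧ w ∈ V₁)) ∧
      (∀ v ∈ V₁, t₁ ≤ {w | G'.Adj v w}.ncard) ∧
      (∀ v ∈ V₂, t₂ ≤ {w | G'.Adj v w}.ncard) :=
  bipartite_min_degree_subgraph_general t₁ t₂ G hbip hdeg
end

section
/- Let t be an odd natural number and let G be a graph on n vertices with more than (1 - 1/(t+1))·(t-1)·n edges. Then G contains (as a subgraph) every tree T having t edges. -/
/-!
Deleting vertices of degree at most `t - 2` one at a time preserves `e > a n` for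
`a = t (t - 1) / (t + 1)`, since `a ≥ t - 2`. The process stops at a subgraph `H` of minimum
degree at least `t - 1`, and because `2 a ≥ t - 1` the graph `H` is not `(t - 1)`-regular, so
some vertex `v₀` has degree at least `t`. Removing a leaf `ℓ` from the tree leaves a tree with
`t - 1` edges, which embeds greedily, leaf by leaf, into `H` with the neighbour of `ℓ` at `v₀`;
then `v₀` still has a free neighbour for `ℓ`.
-/

open Finset

universe u

namespace SimpleGraph

theorem exists_le_degree_of_mul_card_lt_card_edgeFinset (k : ℕ) {a : ℝ}
    (hk : (k : ℝ) - 1 ≤ 2 * a) {V : Type*} [Fintype V] [DecidableEq V] (G : SimpleGraph V)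
    [DecidableRel G.Adj] (hG : a * Fintype.card V < #G.edgeFinset) :
    ∃ v, k ≤ G.degree v := by
  by_contra! hdeg
  have hsum : ∑ v, (G.degree v : ℝ) ≤ ∑ _v : V, ((k : ℝ) - 1) := sum_le_sum fun v _ ↦ by
    have : (G.degree v : ℝ) + 1 ≤ k := by exact_mod_cast hdeg v
    linarith
  have hdegsum : ∑ v, (G.degree v : ℝ) = 2 * #G.edgeFinset := by
    exact_mod_cast G.sum_degrees_eq_twice_card_edges
  rw [sum_const, card_univ, nsmul_eq_mul, hdegsum] at hsum
  nlinarith [(Fintype.card V).cast_nonneg (α := ℝ)]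

theorem exists_isContained_of_mul_card_lt_card_edgeFinset (k : ℕ) {a : ℝ}
    (hk₂ : (k : ℝ) - 2 ≤ a) (hk₁ : (k : ℝ) - 1 ≤ 2 * a)
    {V : Type u} [Fintype V] [DecidableEq V] (G : SimpleGraph V) [DecidableRel G.Adj]
    (hG : a * Fintype.card V < #G.edgeFinset) :
    ∃ (U : Type u) (H : SimpleGraph U) (_ : H.LocallyFinite), H ⊑ G ∧
      (∀ u, k ≤ H.degree u + 1) ∧ ∃ u, k ≤ H.degree u := by
  by_cases hlow : ∃ v, G.degree v + 2 ≤ k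
  · obtain ⟨v, hv⟩ := hlow
    have hcard : Fintype.card ({v}ᶜ : Set V) + 1 = Fintype.card V := by
      rw [Fintype.card_compl_set, Set.card_singleton,
        Nat.sub_add_cancel (Fintype.card_pos_iff.mpr ⟨v⟩)]
    have hedges : #(G.induce {v}ᶜ).edgeFinset + G.degree v = #G.edgeFinset := by
      rw [card_edgeFinset_induce_compl_singleton, card_edgeFinset_deleteIncidenceSet,
        Nat.sub_add_cancel (G.degree_le_card_edgeFinset v)]
    have hv' : (G.degree v : ℝ) + 2 ≤ k := by exact_mod_cast hv
    have hG' : a * Fintype.card ({v}ᶜ : Set V) < #(G.induce {v}ᶜ).edgeFinset := by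
      rw [← hcard, ← hedges] at hG
      push_cast at hG
      linarith
    obtain ⟨U, H, _, hHG, hH⟩ :=
      exists_isContained_of_mul_card_lt_card_edgeFinset k hk₂ hk₁ (G.induce {v}ᶜ) hG'
    exact ⟨U, H, inferInstance, hHG.trans ⟨Copy.induce G _⟩, hH⟩
  push Not at hlow
  exact ⟨V, G, inferInstance, .rfl, fun v ↦ by have := hlow v; omega,
    exists_le_degree_of_mul_card_lt_card_edgeFinset k hk₁ G hG⟩
termination_by Fintype.card V
decreasing_by omega

variable {V W : Type*} {T : SimpleGraph W} {H : SimpleGraph V}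

theorem Copy.exists_extend_of_forall_adj_eq [Fintype W] [H.LocallyFinite] {ℓ p : W}
    (hp : T.Adj ℓ p) (huniq : ∀ w, T.Adj ℓ w → w = p) (f : Copy (T.induce {ℓ}ᶜ) H)
    (hdeg : Fintype.card W ≤ H.degree (f ⟨p, hp.ne'⟩) + 1) :
    ∃ f' : Copy T H, ∀ w : ({ℓ}ᶜ : Set W), f' w = f w := by
  classical
  set x := f ⟨p, hp.ne'⟩
  obtain ⟨u, hxu, hu⟩ : ∃ u, H.Adj x u ∧ ∀ w, f w ≠ u := by
    by_contra! h
    have hx : x ∈ univ.image f := mem_image_of_mem _ (mem_univ _)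
    have hsub : H.neighborFinset x ⊆ (univ.image f).erase x := fun u hu ↦ by
      rw [mem_neighborFinset] at hu
      obtain ⟨w, rfl⟩ := h u hu
      exact mem_erase.mpr ⟨hu.ne', mem_image_of_mem _ (mem_univ w)⟩
    have hdeg_le := card_le_card hsub
    rw [card_neighborFinset_eq_degree, card_erase_of_mem hx] at hdeg_le
    have himage : #(univ.image f) ≤ Fintype.card W - 1 := by
      have := card_image_le (s := univ) (f := f)
      rwa [card_univ, Fintype.card_compl_set, Set.card_singleton] at this
    have := card_pos.mpr ⟨x, hx⟩
    omega
  let g (w : W) : V := if h : w = ℓ then u else f ⟨w, Set.mem_compl_singleton_iff.mpr h⟩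
  refine ⟨⟨⟨g, ?_⟩, ?_⟩, fun w ↦ dif_neg w.2⟩
  · intro a b hab
    dsimp only [g]
    split_ifs with ha hb hb
    · exact absurd (ha.trans hb.symm) hab.ne
    · subst ha
      obtain rfl := huniq b hab
      exact hxu.symm
    · subst hb
      obtain rfl := huniq a hab.symm
      exact hxu
    · exact f.toHom.map_adj hab
  · intro a b hab
    simp only [RelHom.coeFn_mk, g] at hab
    split_ifs at hab with ha hb hb
    · exact ha.trans hb.symm
    · exact absurd hab.symm (hu _)
    · exact absurd hab (hu _)
    · exact congrArg Subtype.val (f.injective hab)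

theorem IsTree.induce_compl_singleton_of_degree_eq_one {ℓ : W} [Fintype (T.neighborSet ℓ)]
    (hT : T.IsTree) (hℓ : T.degree ℓ = 1) : (T.induce {ℓ}ᶜ).IsTree :=
  ⟨hT.connected.induce_compl_singleton_of_degree_eq_one hℓ, hT.isAcyclic.induce _⟩

theorem IsTree.exists_copy_apply_eq [Fintype W] [H.LocallyFinite] (hT : T.IsTree)
    (hH : ∀ v, Fintype.card W ≤ H.degree v + 1) (r : W) (v : V) :
    ∃ f : Copy T H, f r = v := by
  classical
  induction hn : Fintype.card W generalizing W with
  | zero => exact absurd hn (Fintype.card_pos_iff.mpr ⟨r⟩).ne'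
  | succ n ih =>
    rcases subsingleton_or_nontrivial W with hW | hW
    · exact ⟨⟨⟨fun _ ↦ v, fun hab ↦ absurd (Subsingleton.elim _ _) hab.ne⟩,
        fun a b _ ↦ Subsingleton.elim a b⟩, rfl⟩
    obtain ⟨ℓ, hℓr, hℓ⟩ : ∃ ℓ, ℓ ≠ r ∧ T.degree ℓ = 1 := by
      obtain ⟨ℓ₁, ℓ₂, hne, h₁, h₂⟩ := hT.exists_ne_and_degree_eq_one
      by_cases h : ℓ₁ = r
      exacts [⟨ℓ₂, h ▸ hne.symm, h₂⟩, ⟨ℓ₁, h, h₁⟩]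
    obtain ⟨p, hp, huniq⟩ := degree_eq_one_iff_existsUnique_adj.mp hℓ
    have hT' := hT.induce_compl_singleton_of_degree_eq_one hℓ
    have hcard : Fintype.card ({ℓ}ᶜ : Set W) = n := by
      rw [Fintype.card_compl_set, hn, Set.card_singleton, Nat.add_sub_cancel]
    obtain ⟨f, hf⟩ := ih hT' (fun v ↦ by have := hH v; omega) ⟨r, hℓr.symm⟩ hcard
    obtain ⟨f', hf'⟩ := Copy.exists_extend_of_forall_adj_eq hp huniq f (hH _)
    exact ⟨f', (hf' _).trans hf⟩

theorem IsTree.isContained_of_card_edgeFinset_le [Fintype W] [Fintype T.edgeSet]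
    [H.LocallyFinite] (hT : T.IsTree) (hH : ∀ v, #T.edgeFinset ≤ H.degree v + 1) {v₀ : V}
    (hv₀ : #T.edgeFinset ≤ H.degree v₀) : T ⊑ H := by
  classical
  have hcard := hT.card_edgeFinset
  rcases subsingleton_or_nontrivial W with hW | hW
  · obtain ⟨r⟩ := hT.connected.nonempty
    have := Fintype.card_le_one_iff_subsingleton.mpr hW
    obtain ⟨f, -⟩ := hT.exists_copy_apply_eq (H := H) (fun v ↦ by omega) r v₀
    exact ⟨f⟩
  obtain ⟨ℓ, hℓ⟩ := hT.exists_vert_degree_one_of_nontrivial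
  obtain ⟨p, hp, huniq⟩ := degree_eq_one_iff_existsUnique_adj.mp hℓ
  have hT' := hT.induce_compl_singleton_of_degree_eq_one hℓ
  have hcard' : Fintype.card ({ℓ}ᶜ : Set W) = #T.edgeFinset := by
    rw [Fintype.card_compl_set, ← hcard, Set.card_singleton, Nat.add_sub_cancel]
  obtain ⟨f, hf⟩ := hT'.exists_copy_apply_eq (by rwa [hcard']) ⟨p, hp.ne'⟩ v₀
  obtain ⟨f', -⟩ := Copy.exists_extend_of_forall_adj_eq hp huniq f (by rw [hf]; omega)
  exact ⟨f'⟩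

end SimpleGraph

theorem turan_trees_odd_general {V : Type} [Fintype V] [DecidableEq V] (t n : ℕ)
    (G : SimpleGraph V) [DecidableRel G.Adj]
    (hn : Fintype.card V = n)
    (hm : (1 - 1 / ((t : ℝ) + 1)) * ((t : ℝ) - 1) * n < G.edgeFinset.card) :
    ∀ (W : Type) [Fintype W] [DecidableEq W] (T : SimpleGraph W)
      [DecidableRel T.Adj], T.IsTree → T.edgeFinset.card = t →
      ∃ f : W ↪ V, ∀ a b, T.Adj a b → G.Adj (f a) (f b) := by
  intro W _ _ T _ hT hTt
  have hpos : (0 : ℝ) < t + 1 := by positivity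
  have ha : (1 - 1 / ((t : ℝ) + 1)) * ((t : ℝ) - 1) = t * (t - 1) / (t + 1) := by
    field_simp
    ring
  have hk₂ : (t : ℝ) - 2 ≤ (1 - 1 / ((t : ℝ) + 1)) * ((t : ℝ) - 1) := by
    rw [ha, le_div_iff₀ hpos]
    nlinarith
  have hk₁ : (t : ℝ) - 1 ≤ 2 * ((1 - 1 / ((t : ℝ) + 1)) * ((t : ℝ) - 1)) := by
    rw [ha, mul_div_assoc', le_div_iff₀ hpos]
    nlinarith [sq_nonneg ((t : ℝ) - 1)]
  obtain ⟨U, H, _, ⟨g⟩, hH, v₀, hv₀⟩ :=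
    SimpleGraph.exists_isContained_of_mul_card_lt_card_edgeFinset t hk₂ hk₁ G (hn ▸ hm)
  obtain ⟨f⟩ := hT.isContained_of_card_edgeFinset_le (H := H) (hTt ▸ hH) (hTt ▸ hv₀)
  exact ⟨(g.comp f).toEmbedding, fun a b hab ↦ (g.comp f).toHom.map_adj hab⟩

/-- **Proposition (odd case).** Let `t` be an odd natural number and let `G`
be a graph on `n` vertices with more than `(1 - 1/(t+1))·(t-1)·n` edges. Then
`G` contains every tree with `t` edges. -/
theorem turan_trees_odd {V : Type} [Fintype V] [DecidableEq V] (t n : ℕ)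
    (ht : Odd t) (G : SimpleGraph V) [DecidableRel G.Adj]
    (hn : Fintype.card V = n)
    (hm : (1 - 1 / ((t : ℝ) + 1)) * ((t : ℝ) - 1) * n < G.edgeFinset.card) :
    ∀ (W : Type) [Fintype W] [DecidableEq W] (T : SimpleGraph W)
      [DecidableRel T.Adj], T.IsTree → T.edgeFinset.card = t →
      ∃ f : W ↪ V, ∀ a b, T.Adj a b → G.Adj (f a) (f b) :=
  turan_trees_odd_general t n G hn hm
end

section
/- Let G be a bipartite graph with m edges whose set of non-isolated vertices has size s. If m > ((t-1)/2)·s, then G contains (as a subgraph) every tree T having t edges. (This is the case r = 2 of the main theorem, since for a graph the shadow is exactly its set of non-isolated vertices.) -/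
/-!
Two-colour `G` and the tree `T`, whose colour classes have sizes `a + b = t + 1`. Give a vertex
of `G` the weight `b - 1` or `a - 1` according to its colour; swapping the colours of `G` turns
each weight into the other one, so for one of the two colourings the total weight of the
non-isolated vertices is at most `(t - 1) s / 2 < m`. Repeatedly deleting a vertex whose degree
is at most its weight removes at most the weight of each deleted vertex in edges, so a nonempty
set of vertices survives in which every vertex has more neighbours than its weight. There `T`
embeds greedily, colour class to colour class, leaf by leaf: the image of the parent of a new
leaf has at least as many neighbours as the leaf's colour class of `T` has vertices, and all of
them lie in the matching colour class of `G`, so one of them is still unused.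
-/

open Finset SimpleGraph

namespace SimpleGraph

variable {V : Type*} {G : SimpleGraph V} [DecidableRel G.Adj]

variable (G) in
def degreeIn (S : Finset V) (v : V) : ℕ := #{w ∈ S | G.Adj v w}

lemma degreeIn_eq_degree [Fintype V] {S : Finset V} {v : V} (h : ∀ w, G.Adj v w → w ∈ S) :
    G.degreeIn S v = G.degree v := by
  rw [degreeIn, ← card_neighborFinset_eq_degree]
  congr 1
  ext w
  simp only [mem_filter, mem_neighborFinset]
  exact ⟨And.right, fun hw => ⟨h w hw, hw⟩⟩

lemma sum_degreeIn_insert [DecidableEq V] {S : Finset V} {v : V} (hv : v ∉ S) :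
    ∑ x ∈ insert v S, G.degreeIn (insert v S) x
      = ∑ x ∈ S, G.degreeIn S x + 2 * G.degreeIn (insert v S) v := by
  simp only [degreeIn, card_filter, sum_insert hv, G.irrefl, if_false, zero_add]
  rw [sum_add_distrib, ← sum_comm' (fun _ _ => Iff.rfl)]
  simp only [G.adj_comm]
  ring

lemma sum_degreeIn_filter_degree_pos [Fintype V] :
    ∑ v ∈ {v | 0 < G.degree v}, G.degreeIn {v | 0 < G.degree v} v = 2 * #G.edgeFinset := by
  have hdeg : ∀ v, G.degreeIn {v | 0 < G.degree v} v = G.degree v := fun v =>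
    degreeIn_eq_degree fun w hvw =>
      mem_filter.2 ⟨mem_univ w, (G.degree_pos_iff_exists_adj w).2 ⟨v, hvw.symm⟩⟩
  rw [sum_congr rfl fun v _ => hdeg v, sum_filter_of_ne fun v _ hv => Nat.pos_of_ne_zero hv,
    sum_degrees_eq_twice_card_edges]

theorem exists_nonempty_forall_lt_degreeIn [DecidableEq V] {R : Type*} [CommRing R]
    [LinearOrder R] [IsStrictOrderedRing R] (w : V → R) (S : Finset V)
    (h : ∑ v ∈ S, 2 * w v < ∑ v ∈ S, (G.degreeIn S v : R)) :
    ∃ S' ⊆ S, S'.Nonempty ∧ ∀ v ∈ S', w v < G.degreeIn S' v := by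
  induction S using Finset.strongInduction with
  | H S ih =>
  by_cases hgood : ∀ v ∈ S, w v < G.degreeIn S v
  · refine ⟨S, subset_rfl, nonempty_iff_ne_empty.2 ?_, hgood⟩
    rintro rfl
    simp at h
  push Not at hgood
  obtain ⟨v, hv, hvw⟩ := hgood
  have hsum := G.sum_degreeIn_insert (notMem_erase v S)
  rw [insert_erase hv] at hsum
  obtain ⟨S', hS', hne, hlt⟩ := ih (S.erase v) (erase_ssubset hv) <| by
    rw [← add_sum_erase S _ hv] at h
    have := congrArg (Nat.cast : ℕ → R) hsum
    push_cast at this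
    linarith
  exact ⟨S', hS'.trans (erase_subset v S), hne, hlt⟩

section TreeEmbedding

variable {W : Type*} [Fintype W] {T : SimpleGraph W}
  (cT : T.Coloring Bool) (c : G.Coloring Bool) {S : Finset V}

lemma exists_mem_color_eq (hS : S.Nonempty)
    (hdeg : ∀ v ∈ S, #{x | cT x ≠ c v} ≤ G.degreeIn S v) (x : W) : ∃ v ∈ S, c v = cT x := by
  obtain ⟨v, hv⟩ := hS
  by_cases hvx : c v = cT x
  · exact ⟨v, hv, hvx⟩
  have : 0 < G.degreeIn S v :=
    (card_pos.2 ⟨x, mem_filter.2 ⟨mem_univ x, fun h => hvx h.symm⟩⟩).trans_le (hdeg v hv)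
  obtain ⟨u, hu⟩ := card_pos.1 this
  rw [mem_filter] at hu
  exact ⟨u, hu.1,
    (Bool.eq_not_iff.2 (c.valid hu.2).symm).trans (Bool.eq_not_iff.2 fun h => hvx h.symm).symm⟩

variable [DecidableEq W]

lemma card_filter_subtype_ne (l : W) (P : W → Prop) [DecidablePred P] :
    #{x : {x // x ≠ l} | P x} = #(({x | P x} : Finset W).erase l) := by
  rw [← filter_ne', ← card_subtype (· ≠ l)]
  congr 1
  ext x
  simp

variable [DecidableEq V]

lemma exists_adj_notMem_range (hdeg : ∀ v ∈ S, #{x | cT x ≠ c v} ≤ G.degreeIn S v)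
    {l p : W} (hlp : T.Adj l p) (f : {x // x ≠ l} ↪ V) (hfS : ∀ x, f x ∈ S)
    (hfc : ∀ x, c (f x) = cT x) :
    ∃ w ∈ S, G.Adj (f ⟨p, hlp.ne'⟩) w ∧ w ∉ Set.range f := by
  set v := f ⟨p, hlp.ne'⟩
  have hvp : c v = cT p := hfc _
  by_contra! h
  have hsub : {w ∈ S | G.Adj v w} ⊆ ({x | cT x ≠ cT p} : Finset {x // x ≠ l}).map f := by
    intro w hw
    rw [mem_filter] at hw
    obtain ⟨x, rfl⟩ := h w hw.1 hw.2
    refine mem_map_of_mem f (mem_filter.2 ⟨mem_univ x, ?_⟩)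
    rw [← hfc, ← hvp]
    exact (c.valid hw.2).symm
  have hl : l ∈ ({x | cT x ≠ cT p} : Finset W) := mem_filter.2 ⟨mem_univ l, cT.valid hlp⟩
  have hlt := (card_le_card hsub).trans_lt <| by
    rw [card_map, card_filter_subtype_ne l (fun x => cT x ≠ cT p)]
    exact card_erase_lt_of_mem hl
  have hv := hdeg v (hfS _)
  rw [hvp] at hv
  exact hlt.not_ge hv

lemma exists_embedding_extend_leaf (hdeg : ∀ v ∈ S, #{x | cT x ≠ c v} ≤ G.degreeIn S v)
    {l p : W} (hlp : T.Adj l p) (hp : ∀ y, T.Adj l y → y = p) (f' : {x // x ≠ l} ↪ V)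
    (hf'S : ∀ x, f' x ∈ S) (hf'c : ∀ x, c (f' x) = cT x)
    (hf'adj : ∀ x y : {x // x ≠ l}, T.Adj x y → G.Adj (f' x) (f' y)) :
    ∃ f : W ↪ V, (∀ x, f x ∈ S) ∧ (∀ x, c (f x) = cT x) ∧
      ∀ x y, T.Adj x y → G.Adj (f x) (f y) := by
  obtain ⟨w, hwS, hvw, hw⟩ := exists_adj_notMem_range cT c hdeg hlp f' hf'S hf'c
  let f := (Equiv.optionSubtypeNe l).symm.toEmbedding.trans (f'.optionElim w hw)
  have hfl : f l = w := by
    change f'.optionElim w hw ((Equiv.optionSubtypeNe l).symm l) = w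
    rw [Equiv.optionSubtypeNe_symm_self]
    rfl
  have hf : ∀ x (hx : x ≠ l), f x = f' ⟨x, hx⟩ := fun x hx => by
    change f'.optionElim w hw ((Equiv.optionSubtypeNe l).symm x) = _
    rw [Equiv.optionSubtypeNe_symm_of_ne hx]
    rfl
  have hwl : c w = cT l := by
    have hwp : c w ≠ cT p := hf'c ⟨p, hlp.ne'⟩ ▸ (c.valid hvw).symm
    exact (Bool.eq_not_iff.2 hwp).trans (Bool.eq_not_iff.2 (cT.valid hlp)).symm
  refine ⟨f, fun x => ?_, fun x => ?_, fun x y hxy => ?_⟩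
  · rcases eq_or_ne x l with rfl | hx
    · exact hfl ▸ hwS
    · exact hf x hx ▸ hf'S _
  · rcases eq_or_ne x l with rfl | hx
    · exact hfl ▸ hwl
    · exact hf x hx ▸ hf'c _
  · rcases eq_or_ne x l with rfl | hx
    · obtain rfl := hp y hxy
      rw [hfl, hf y hlp.ne']
      exact hvw.symm
    rcases eq_or_ne y l with rfl | hy
    · obtain rfl := hp x hxy.symm
      rw [hfl, hf x hlp.ne']
      exact hvw
    rw [hf x hx, hf y hy]
    exact hf'adj _ _ hxy

theorem IsTree.exists_embedding_of_le_degreeIn [DecidableRel T.Adj] (hT : T.IsTree)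
    (hS : S.Nonempty) (hdeg : ∀ v ∈ S, #{x | cT x ≠ c v} ≤ G.degreeIn S v) :
    ∃ f : W ↪ V, (∀ x, f x ∈ S) ∧ (∀ x, c (f x) = cT x) ∧
      ∀ x y, T.Adj x y → G.Adj (f x) (f y) := by
  induction hn : Fintype.card W using Nat.strong_induction_on generalizing W with
  | _ n ih =>
  cases subsingleton_or_nontrivial W with
  | inl _ =>
    obtain ⟨x₀⟩ := hT.connected.nonempty
    obtain ⟨v, hvS, hv⟩ := exists_mem_color_eq cT c hS hdeg x₀
    exact ⟨⟨fun _ => v, fun x y _ => Subsingleton.elim x y⟩, fun _ => hvS,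
      fun x => Subsingleton.elim x₀ x ▸ hv, fun x y hxy => (hxy.ne (Subsingleton.elim x y)).elim⟩
  | inr _ =>
    obtain ⟨l, hl⟩ := hT.exists_vert_degree_one_of_nontrivial
    obtain ⟨p, hlp, hp⟩ := degree_eq_one_iff_existsUnique_adj.1 hl
    have hT' : (T.induce {l}ᶜ).IsTree :=
      ⟨hT.connected.induce_compl_singleton_of_degree_eq_one hl, hT.isAcyclic.induce _⟩
    have hcard : Fintype.card {x // x ≠ l} < n := by
      rw [← hn, Fintype.card_subtype_compl, Fintype.card_subtype_eq]
      exact Nat.sub_lt Fintype.card_pos one_pos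
    obtain ⟨f', hf'S, hf'c, hf'adj⟩ := ih _ hcard (cT.comap (Embedding.induce _).toHom) hT'
      (fun v hv => (card_filter_subtype_ne l _).trans_le (card_erase_le.trans (hdeg v hv))) rfl
    exact exists_embedding_extend_leaf cT c hdeg hlp hp f' hf'S hf'c hf'adj

end TreeEmbedding

end SimpleGraph

lemma Bool.card_ne_true_add_card_ne_false {ι : Type*} [Fintype ι] (f : ι → Bool) :
    #{x | f x ≠ true} + #{x | f x ≠ false} = Fintype.card ι := by
  rw [← card_univ, ← card_filter_add_card_filter_not (s := univ) (fun x => f x ≠ true)]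
  simp

lemma Bool.exists_sum_xor_lt {ι R : Type*} [CommRing R] [LinearOrder R] [IsStrictOrderedRing R]
    (P : Finset ι) (c : ι → Bool) (ω : Bool → R) {M : R}
    (h : #P * (ω true + ω false) < 2 * M) : ∃ b : Bool, ∑ v ∈ P, ω (xor b (c v)) < M := by
  have hsum : ∑ b : Bool, ∑ v ∈ P, ω (xor b (c v)) < ∑ _b : Bool, M := by
    rw [sum_comm]
    have hv : ∀ v, ∑ b : Bool, ω (xor b (c v)) = ω true + ω false := fun v => by
      cases c v <;> simp [add_comm]
    simp only [hv, sum_const, card_univ, Fintype.card_bool, nsmul_eq_mul]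
    push_cast
    linarith
  obtain ⟨b, -, hb⟩ := exists_lt_of_sum_lt hsum
  exact ⟨b, hb⟩

/-- **Main theorem for `r = 2`.** Let `G` be a bipartite graph with `m` edges
whose set of non-isolated vertices has size `s`. If `m > ((t-1)/2)·s`, then
`G` contains every tree with `t` edges. -/
theorem bipartite_erdos_sos {V : Type} [Fintype V] [DecidableEq V] (t m s : ℕ)
    (G : SimpleGraph V) [DecidableRel G.Adj]
    (hbip : ∃ c : V → Bool, ∀ v w, G.Adj v w → c v ≠ c w)
    (hm : G.edgeFinset.card = m)
    (hs : (Finset.univ.filter fun v => 0 < G.degree v).card = s)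
    (hms : ((t : ℝ) - 1) / 2 * s < m) :
    ∀ (W : Type) [Fintype W] [DecidableEq W] (T : SimpleGraph W)
      [DecidableRel T.Adj], T.IsTree → T.edgeFinset.card = t →
      ∃ f : W ↪ V, ∀ a b, T.Adj a b → G.Adj (f a) (f b) := by
  intro W _ _ T _ hT ht
  obtain ⟨c, hc⟩ := hbip
  let cT : T.Coloring Bool := T.recolorOfEquiv finTwoEquiv hT.coloringTwo
  let ω : Bool → ℝ := fun b => #{x | cT x ≠ b} - 1
  have hω : ω true + ω false = t - 1 := by
    have hclasses : (#{x | cT x ≠ true} + #{x | cT x ≠ false} : ℝ) = t + 1 := by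
      exact_mod_cast (Bool.card_ne_true_add_card_ne_false cT).trans (ht ▸ hT.card_edgeFinset).symm
    simp only [ω]
    linarith
  set P : Finset V := {v | 0 < G.degree v}
  obtain ⟨b, hb⟩ := Bool.exists_sum_xor_lt P c (fun b => 2 * ω b)
    (M := ∑ v ∈ P, (G.degreeIn P v : ℝ)) <| by
    rw [← mul_add, hω, hs, ← Nat.cast_sum, sum_degreeIn_filter_degree_pos, hm]
    push_cast
    linarith
  let cG : G.Coloring Bool := Coloring.mk (fun v => xor b (c v)) fun h => by simpa using hc _ _ h
  obtain ⟨S, -, hS, hlt⟩ := exists_nonempty_forall_lt_degreeIn (fun v => ω (cG v)) P hb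
  obtain ⟨f, -, -, hf⟩ := hT.exists_embedding_of_le_degreeIn cT cG hS fun v hv => by
    have := hlt v hv
    simp only [ω, sub_lt_iff_lt_add] at this
    exact Nat.lt_succ_iff.1 (by exact_mod_cast this)
  exact ⟨f, hf⟩
end
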